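/- Let I = [0,1] and let F : I → Matrix (Fin n) (Fin m) ℝ be a function such that every t₀ ∈ I has a compact neighborhood on which F agrees with a convergent power series (in t − t₀) with matrix coefficients. Suppose rank(F t₁) ≥ k for some t₁ ∈ I. Then {t ∈ I : rank(F t) < k} is finite. -/

import Mathlib

/-!
A rank bound `k ≤ rank (F t₁)` is witnessed by a nonzero `k × k` minor of `F t₁`. The same minor,
as a function of `t`, is a polynomial in the entries of `F`, hence analytic at every point of
`[0, 1]`. Since it does not vanish identically, the identity theorem on the compact connected
interval leaves it only finitely many zeros there, and wherever it is nonzero the rank is `≥ k`.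
-/

open Module Set Matrix

theorem exists_linearIndependent_comp_of_le_finrank_span {K V ι : Type*} [DivisionRing K]
    [AddCommGroup V] [Module K V] [Finite ι] (v : ι → V) {k : ℕ}
    (hk : k ≤ finrank K (Submodule.span K (range v))) :
    ∃ c : Fin k → ι, LinearIndependent K (v ∘ c) := by
  obtain ⟨κ, a, ha, hspan, hli⟩ := exists_linearIndependent' K v
  have : Finite κ := Finite.of_injective a ha
  have := Fintype.ofFinite κ
  rw [← hspan, finrank_span_eq_card hli] at hk
  obtain ⟨e⟩ : Nonempty (Fin k ↪ κ) := Function.Embedding.nonempty_of_card_le (by simpa using hk)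
  exact ⟨a ∘ e, hli.comp e e.injective⟩

theorem Matrix.le_rank_iff_exists_submatrix_det_ne_zero {R m n : Type*} [Field R]
    [Fintype m] [Fintype n] (A : Matrix m n R) {k : ℕ} :
    k ≤ A.rank ↔ ∃ (r : Fin k → m) (c : Fin k → n), (A.submatrix r c).det ≠ 0 := by
  constructor
  · -- `k` independent columns, then `k` independent rows of the block they form
    intro hk
    rw [rank_eq_finrank_span_cols] at hk
    obtain ⟨c, hc⟩ := exists_linearIndependent_comp_of_le_finrank_span A.col hk
    have hB : k ≤ finrank R (Submodule.span R (range (A.submatrix id c).row)) := by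
      rw [← rank_eq_finrank_span_row, rank_eq_finrank_span_cols, show (A.submatrix id c).col = A.col ∘ c from rfl, finrank_span_eq_card hc,
        Fintype.card_fin]
    obtain ⟨r, hr⟩ := exists_linearIndependent_comp_of_le_finrank_span _ hB
    exact ⟨r, c, ((isUnit_iff_isUnit_det _).mp (linearIndependent_rows_iff_isUnit.mp hr)).ne_zero⟩
  · rintro ⟨r, c, hdet⟩
    calc k = (A.submatrix r c).rank := by rw [rank_of_det_ne_zero hdet, Fintype.card_fin]
      _ ≤ A.rank := rank_submatrix_le A r c

theorem AnalyticAt.matrix_det {𝕜 E A ι : Type*} [NontriviallyNormedField 𝕜]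
    [NormedAddCommGroup E] [NormedSpace 𝕜 E] [NormedCommRing A] [NormedAlgebra 𝕜 A]
    [Fintype ι] [DecidableEq ι] {M : E → Matrix ι ι A} {x : E}
    (hM : ∀ i j, AnalyticAt 𝕜 (fun y => M y i j) x) : AnalyticAt 𝕜 (fun y => (M y).det) x := by
  simp only [det_apply']
  exact Finset.analyticAt_fun_sum _ fun σ _ =>
    analyticAt_const.mul (Finset.analyticAt_fun_prod _ fun i _ => hM (σ i) i)

theorem AnalyticOnNhd.finite_zeros_of_isCompact {𝕜 E : Type*} [NontriviallyNormedField 𝕜]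
    [NormedAddCommGroup E] [NormedSpace 𝕜 E] {f : 𝕜 → E} {K : Set 𝕜} {x₀ : 𝕜}
    (hf : AnalyticOnNhd 𝕜 f K) (hK : IsCompact K) (hK' : IsPreconnected K) (hx₀ : x₀ ∈ K)
    (hfx₀ : f x₀ ≠ 0) : {x ∈ K | f x = 0}.Finite := by
  have hne := (hf.eqOn_zero_or_eventually_ne_zero_of_preconnected hK').resolve_left
    fun h => hfx₀ (h hx₀)
  exact (hK.finite_sdiff_of_mem_codiscreteWithin hne).subset fun x ⟨hxK, hx⟩ => ⟨hxK, not_not.2 hx⟩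

theorem stmt_9 (n m : ℕ) (F : ℝ → Matrix (Fin n) (Fin m) ℝ)
    (hF : ∀ t₀ ∈ Set.Icc (0:ℝ) 1, ∃ ε : ℝ, 0 < ε ∧ ∀ i j,
      ∃ p : FormalMultilinearSeries ℝ ℝ ℝ,
        HasFPowerSeriesOnBall (fun t => F t i j) p t₀ (ENNReal.ofReal ε))
    (k : ℕ) (t₁ : ℝ) (ht₁ : t₁ ∈ Set.Icc (0:ℝ) 1) (hrk : k ≤ (F t₁).rank) :
    {t ∈ Set.Icc (0:ℝ) 1 | (F t).rank < k}.Finite := by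
  have hentries : ∀ i j, AnalyticOnNhd ℝ (fun t => F t i j) (Icc 0 1) := fun i j t ht => by
    obtain ⟨ε, -, hp⟩ := hF t ht
    obtain ⟨p, hp⟩ := hp i j
    exact hp.analyticAt
  obtain ⟨r, c, hdet⟩ := (F t₁).le_rank_iff_exists_submatrix_det_ne_zero.mp hrk
  have hminor : AnalyticOnNhd ℝ (fun t => ((F t).submatrix r c).det) (Icc 0 1) :=
    fun t ht => AnalyticAt.matrix_det fun i j => hentries (r i) (c j) t ht
  refine (hminor.finite_zeros_of_isCompact isCompact_Icc isPreconnected_Icc ht₁ hdet).subset ?_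
  rintro t ⟨ht, hlt⟩
  refine ⟨ht, by_contra fun hne => hlt.not_ge ?_⟩
  exact (F t).le_rank_iff_exists_submatrix_det_ne_zero.mpr ⟨r, c, hne⟩
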